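/- Let f, g : ℝ → ℂ be smooth, 2π-periodic, nowhere-vanishing functions, let L_f, L_g : ℝ → ℂ be branches of log f and log g on [0,2π] respectively, and let m, n ∈ ℤ satisfy ∫₀^{2π} f'(t)/f(t) dt = 2πi·m and ∫₀^{2π} g'(t)/g(t) dt = 2πi·n. Then [exp((1/(2πi)) ∫₀^{2π} L_f(t)·g'(t)/g(t) dt) · g(0)^{−m}] · [exp((1/(2πi)) ∫₀^{2π} L_g(t)·f'(t)/f(t) dt) · f(0)^{−n}] = 1; that is, the Deligne–Beilinson pairing is antisymmetric: T(f,g)·T(g,f) = 1. -/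

import Mathlib

open intervalIntegral MeasureTheory Set Complex

lemma logDeriv_cont' (f : ℝ → ℂ) (hf : ContDiff ℝ (⊤ : ℕ∞) f) (hfne : ∀ t, f t ≠ 0) :
    Continuous (fun t => deriv f t / f t) :=
  (hf.continuous_deriv (by simp)).div hf.continuous hfne

lemma exp_primitive' (f : ℝ → ℂ) (hf : ContDiff ℝ (⊤ : ℕ∞) f) (hfne : ∀ t, f t ≠ 0) (t : ℝ) :
    Complex.exp (∫ s in (0:ℝ)..t, deriv f s / f s) * f 0 = f t := by
  set F : ℝ → ℂ := fun u => ∫ s in (0:ℝ)..u, deriv f s / f s with hF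
  have hFd : ∀ u : ℝ, HasDerivAt F (deriv f u / f u) u := fun u =>
    ((logDeriv_cont' f hf hfne).integral_hasStrictDerivAt 0 u).hasDerivAt
  have hφ : ∀ u : ℝ, HasDerivAt (fun s => Complex.exp (-F s) * f s) 0 u := by
    intro u
    have hft : HasDerivAt f (deriv f u) u := ((hf.differentiable (by simp)) u).hasDerivAt
    have h1 := ((hFd u).neg).cexp
    have h3 : HasDerivAt (fun s => Complex.exp (-F s) * f s) _ u := h1.mul hft
    convert h3 using 1
    have := hfne u
    linear_combination (Complex.exp ((-F) u)) * div_mul_cancel₀ (deriv f u) this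
  have hconst : ∀ u : ℝ, Complex.exp (-F u) * f u = Complex.exp (-F 0) * f 0 :=
    fun u => is_const_of_deriv_eq_zero (fun s => (hφ s).differentiableAt)
      (fun s => (hφ s).deriv) u 0
  have h0 : F 0 = 0 := intervalIntegral.integral_same
  have key := hconst t
  rw [h0, neg_zero, Complex.exp_zero, one_mul] at key
  calc Complex.exp (F t) * f 0 = Complex.exp (F t) * (Complex.exp (-F t) * f t) := by rw [key]
    _ = f t := by rw [← mul_assoc, ← Complex.exp_add, add_neg_cancel, Complex.exp_zero, one_mul]

lemma branch_eq' (f : ℝ → ℂ) (hf : ContDiff ℝ (⊤ : ℕ∞) f) (hfne : ∀ t, f t ≠ 0)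
    (L : ℝ → ℂ) (hLc : Continuous L)
    (hL : ∀ t ∈ Set.Icc (0:ℝ) (2*Real.pi), Complex.exp (L t) = f t) :
    ∀ t ∈ Set.Icc (0:ℝ) (2*Real.pi),
      L t = (∫ s in (0:ℝ)..t, deriv f s / f s) + L 0 := by
  have pi_pos := Real.pi_pos
  set F : ℝ → ℂ := fun u => ∫ s in (0:ℝ)..u, deriv f s / f s with hFdef
  have hFc : Continuous F := continuous_iff_continuousAt.2 fun u =>
    (((logDeriv_cont' f hf hfne).integral_hasStrictDerivAt 0 u).hasDerivAt).continuousAt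
  have h0mem : (0:ℝ) ∈ Set.Icc (0:ℝ) (2*Real.pi) := ⟨le_refl _, by positivity⟩
  set d : ℝ → ℂ := fun u => L u - (F u + L 0) with hddef
  have hdc : Continuous d := hLc.sub (hFc.add continuous_const)
  have hexp : ∀ t ∈ Set.Icc (0:ℝ) (2*Real.pi), ∃ k : ℤ,
      d t = (k : ℂ) * (2*Real.pi*Complex.I) := by
    intro t ht
    rw [← Complex.exp_eq_one_iff]
    have h1 : Complex.exp (F t + L 0) = f t := by
      rw [Complex.exp_add, hL 0 h0mem]; exact exp_primitive' f hf hfne t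
    have h2 : Complex.exp (d t) * Complex.exp (F t + L 0) = Complex.exp (L t) := by
      rw [← Complex.exp_add]
      congr 1
      simp [hddef]
    rw [h1, hL t ht] at h2
    exact mul_right_cancel₀ (hfne t) (by rw [h2, one_mul])
  have hd0 : d 0 = 0 := by simp [hddef, hFdef]
  intro t ht
  obtain ⟨k, hk⟩ := hexp t ht
  have himval : ∀ (j : ℤ), ((j : ℂ) * (2*Real.pi*Complex.I)).im = 2*Real.pi*j := by
    intro j; simp; ring
  suffices hk0 : k = 0 by
    have : d t = 0 := by rw [hk, hk0]; simp
    have := sub_eq_zero.mp this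
    simpa [hddef] using this
  by_contra hk0
  have hcont : ContinuousOn (fun s => (d s).im) (Set.uIcc (0:ℝ) t) :=
    (Complex.continuous_im.comp hdc).continuousOn
  have hsub : Set.uIcc (0:ℝ) t ⊆ Set.Icc (0:ℝ) (2*Real.pi) := by
    rw [Set.uIcc_of_le ht.1]; exact Set.Icc_subset_Icc le_rfl ht.2
  have himt : (d t).im = 2*Real.pi*k := by rw [hk]; exact himval k
  have him0 : (d 0).im = 0 := by rw [hd0]; simp
  have key : ∀ c : ℝ, c ∈ Set.uIcc ((fun s => (d s).im) 0) ((fun s => (d s).im) t) →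
      ∃ j : ℤ, 2*Real.pi*(j:ℝ) = c := by
    intro c hc
    obtain ⟨s, hs, hsc⟩ := intermediate_value_uIcc hcont hc
    obtain ⟨j, hj⟩ := hexp s (hsub hs)
    exact ⟨j, by rw [← hsc]; simp only [hj, himval]⟩
  rcases lt_or_gt_of_ne hk0 with hneg | hpos
  · have hmem : -Real.pi ∈ Set.uIcc ((fun s => (d s).im) 0) ((fun s => (d s).im) t) := by
      simp only [him0, himt]
      rw [Set.mem_uIcc]
      right
      constructor
      · have : (k:ℝ) ≤ -1 := by exact_mod_cast (show k ≤ -1 by omega)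
        nlinarith
      · linarith
    obtain ⟨j, hj⟩ := key _ hmem
    have hπ : ((2:ℝ)*j + 1) * Real.pi = 0 := by linarith
    have : (2:ℝ)*j + 1 = 0 := by
      rcases mul_eq_zero.mp hπ with h | h
      · exact h
      · exact absurd h (ne_of_gt pi_pos)
    have : (2*j + 1 : ℤ) = 0 := by exact_mod_cast this
    omega
  · have hmem : Real.pi ∈ Set.uIcc ((fun s => (d s).im) 0) ((fun s => (d s).im) t) := by
      simp only [him0, himt]
      rw [Set.mem_uIcc]
      left
      constructor
      · linarith
      · have : (1:ℝ) ≤ (k:ℝ) := by exact_mod_cast hpos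
        nlinarith
    obtain ⟨j, hj⟩ := key _ hmem
    have hπ : ((2:ℝ)*j - 1) * Real.pi = 0 := by linarith
    have : (2:ℝ)*j - 1 = 0 := by
      rcases mul_eq_zero.mp hπ with h | h
      · exact h
      · exact absurd h (ne_of_gt pi_pos)
    have : (2*j - 1 : ℤ) = 0 := by exact_mod_cast this
    omega

/-- **Antisymmetry of the Deligne–Beilinson pairing:** `T(f,g)·T(g,f) = 1`. -/
theorem pairing_antisymmetric (f g : ℝ → ℂ)
    (hf : ContDiff ℝ (⊤ : ℕ∞) f) (hg : ContDiff ℝ (⊤ : ℕ∞) g)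
    (hfper : ∀ t : ℝ, f (t + 2 * Real.pi) = f t)
    (hgper : ∀ t : ℝ, g (t + 2 * Real.pi) = g t)
    (hfne : ∀ t : ℝ, f t ≠ 0) (hgne : ∀ t : ℝ, g t ≠ 0)
    (L_f L_g : ℝ → ℂ) (hLfc : Continuous L_f) (hLgc : Continuous L_g)
    (hLf : ∀ t ∈ Set.Icc (0:ℝ) (2 * Real.pi), Complex.exp (L_f t) = f t)
    (hLg : ∀ t ∈ Set.Icc (0:ℝ) (2 * Real.pi), Complex.exp (L_g t) = g t)
    (m n : ℤ)
    (hm : ∫ t in (0:ℝ)..(2 * Real.pi), deriv f t / f t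
      = 2 * (Real.pi : ℂ) * Complex.I * (m : ℂ))
    (hn : ∫ t in (0:ℝ)..(2 * Real.pi), deriv g t / g t
      = 2 * (Real.pi : ℂ) * Complex.I * (n : ℂ)) :
    (Complex.exp ((1 / (2 * (Real.pi : ℂ) * Complex.I)) *
        ∫ t in (0:ℝ)..(2 * Real.pi), L_f t * (deriv g t / g t)) * g 0 ^ (-m))
    * (Complex.exp ((1 / (2 * (Real.pi : ℂ) * Complex.I)) *
        ∫ t in (0:ℝ)..(2 * Real.pi), L_g t * (deriv f t / f t)) * f 0 ^ (-n))
    = 1 := by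
  have pi_pos := Real.pi_pos
  have h2π : (0:ℝ) ≤ 2*Real.pi := by positivity
  have h0mem : (0:ℝ) ∈ Set.Icc (0:ℝ) (2*Real.pi) := ⟨le_refl _, h2π⟩
  set Ff : ℝ → ℂ := fun u => ∫ s in (0:ℝ)..u, deriv f s / f s with hFfdef
  set Fg : ℝ → ℂ := fun u => ∫ s in (0:ℝ)..u, deriv g s / g s with hFgdef
  have hfc := logDeriv_cont' f hf hfne
  have hgc := logDeriv_cont' g hg hgne
  have hFfd : ∀ u, HasDerivAt Ff (deriv f u / f u) u := fun u =>
    ((hfc.integral_hasStrictDerivAt 0 u)).hasDerivAt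
  have hFgd : ∀ u, HasDerivAt Fg (deriv g u / g u) u := fun u =>
    ((hgc.integral_hasStrictDerivAt 0 u)).hasDerivAt
  have hFfc : Continuous Ff := continuous_iff_continuousAt.2 fun u => (hFfd u).continuousAt
  have hFgc : Continuous Fg := continuous_iff_continuousAt.2 fun u => (hFgd u).continuousAt
  have hLf' := branch_eq' f hf hfne L_f hLfc hLf
  have hLg' := branch_eq' g hg hgne L_g hLgc hLg
  -- rewrite the two integrals
  have hI1 : (∫ t in (0:ℝ)..(2*Real.pi), L_f t * (deriv g t / g t))
      = (∫ t in (0:ℝ)..(2*Real.pi), Ff t * (deriv g t / g t))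
        + L_f 0 * (2 * (Real.pi:ℂ) * Complex.I * (n:ℂ)) := by
    rw [← hn, ← intervalIntegral.integral_const_mul, ← intervalIntegral.integral_add
      (f := fun t => Ff t * (deriv g t / g t)) (g := fun t => L_f 0 * (deriv g t / g t))
      ((hFfc.mul hgc).intervalIntegrable _ _) ((continuous_const.mul hgc).intervalIntegrable _ _)]
    apply intervalIntegral.integral_congr
    intro t ht
    rw [uIcc_of_le h2π] at ht
    dsimp only
    rw [hLf' t ht]; ring
  have hI2 : (∫ t in (0:ℝ)..(2*Real.pi), L_g t * (deriv f t / f t))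
      = (∫ t in (0:ℝ)..(2*Real.pi), Fg t * (deriv f t / f t))
        + L_g 0 * (2 * (Real.pi:ℂ) * Complex.I * (m:ℂ)) := by
    rw [← hm, ← intervalIntegral.integral_const_mul, ← intervalIntegral.integral_add
      (f := fun t => Fg t * (deriv f t / f t)) (g := fun t => L_g 0 * (deriv f t / f t))
      ((hFgc.mul hfc).intervalIntegrable _ _) ((continuous_const.mul hfc).intervalIntegrable _ _)]
    apply intervalIntegral.integral_congr
    intro t ht
    rw [uIcc_of_le h2π] at ht
    dsimp only
    rw [hLg' t ht]; ring
  -- integration by parts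
  have hparts := intervalIntegral.integral_mul_deriv_eq_deriv_mul
      (u := Ff) (v := Fg) (u' := fun t => deriv f t / f t) (v' := fun t => deriv g t / g t)
      (a := 0) (b := 2*Real.pi)
      (fun x _ => hFfd x) (fun x _ => hFgd x)
      (hfc.intervalIntegrable _ _) (hgc.intervalIntegrable _ _)
  have hFf0 : Ff 0 = 0 := intervalIntegral.integral_same
  have hFg0 : Fg 0 = 0 := intervalIntegral.integral_same
  have hFfT : Ff (2*Real.pi) = 2 * (Real.pi:ℂ) * Complex.I * (m:ℂ) := hm
  have hFgT : Fg (2*Real.pi) = 2 * (Real.pi:ℂ) * Complex.I * (n:ℂ) := hn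
  have hcomm : (∫ t in (0:ℝ)..(2*Real.pi), Fg t * (deriv f t / f t))
      = ∫ t in (0:ℝ)..(2*Real.pi), (deriv f t / f t) * Fg t := by
    apply intervalIntegral.integral_congr; intro t _; exact mul_comm _ _
  have hPQ : (∫ t in (0:ℝ)..(2*Real.pi), Ff t * (deriv g t / g t))
      + (∫ t in (0:ℝ)..(2*Real.pi), Fg t * (deriv f t / f t))
      = (2 * (Real.pi:ℂ) * Complex.I * (m:ℂ)) * (2 * (Real.pi:ℂ) * Complex.I * (n:ℂ)) := by
    rw [hcomm, hparts, hFf0, hFg0, hFfT, hFgT]; ring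
  -- put it together
  have h2πI : (2 * (Real.pi:ℂ) * Complex.I) ≠ 0 := by
    simp [Complex.I_ne_zero, Real.pi_ne_zero, Complex.ofReal_ne_zero]
  have hABsum : (1 / (2 * (Real.pi:ℂ) * Complex.I)) *
        (∫ t in (0:ℝ)..(2*Real.pi), L_f t * (deriv g t / g t))
      + (1 / (2 * (Real.pi:ℂ) * Complex.I)) *
        (∫ t in (0:ℝ)..(2*Real.pi), L_g t * (deriv f t / f t))
      = ((m*n : ℤ) : ℂ) * (2 * (Real.pi:ℂ) * Complex.I) + (n:ℂ) * L_f 0 + (m:ℂ) * L_g 0 := by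
    have hc : (1 / (2 * (Real.pi:ℂ) * Complex.I)) * (2 * (Real.pi:ℂ) * Complex.I) = 1 :=
      one_div_mul_cancel h2πI
    rw [hI1, hI2]
    push_cast
    linear_combination (1 / (2 * (Real.pi:ℂ) * Complex.I)) * hPQ
      + ((m:ℂ)*(n:ℂ)*(2 * (Real.pi:ℂ) * Complex.I) + (n:ℂ)*L_f 0 + (m:ℂ)*L_g 0) * hc
  rw [mul_mul_mul_comm, ← Complex.exp_add, hABsum, Complex.exp_add, Complex.exp_add,
    Complex.exp_int_mul_two_pi_mul_I, Complex.exp_int_mul, Complex.exp_int_mul,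
    hLf 0 h0mem, hLg 0 h0mem, one_mul]
  rw [show f 0 ^ n * g 0 ^ m * (g 0 ^ (-m) * f 0 ^ (-n))
      = (f 0 ^ n * f 0 ^ (-n)) * (g 0 ^ m * g 0 ^ (-m)) from by ring,
    ← zpow_add₀ (hfne 0), ← zpow_add₀ (hgne 0)]
  simp
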